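/- arXiv:2307.06455 — 3 statements merged into one kernel-verified Lean document; each statement's English description precedes it below -/
import Mathlib

section
/- Let H be a graph (or ordered graph) and d > 0 a weak viral exponent for {H}: for every ε ∈ (0,1/2) and every graph G with ind_H(G) ≤ (ε^d|G|)^{|H|}, there exists S ⊆ V(G) with |S| ≥ ε^d|G| such that one of G[S], its complement, has at most ε·(|S| choose 2) edges. Then 3d is a viral exponent for {H}: for every ε ∈ (0,1/2) and every G with ind_H(G) ≤ (ε^{3d}|G|)^{|H|}, there is an ε-restricted S ⊆ V(G) with |S| ≥ ε^{3d}|G|. -/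
/-
Apply the weak hypothesis with `ε / 2`, allowed since `ε ^ (3d) ≤ (ε / 2) ^ d`. The resulting set
`S` spans at most `ε |S|² / 2` ordered adjacent pairs of `G` (or of `Gᶜ`). Deleting a vertex of
degree above `ε m` from a set of size `m` removes more than `ε (m² - (m - 1)²)` such pairs, so
greedy deletion stops at a set `T` with maximum degree at most `ε |T|` and
`ε (|S|² - |T|²) ≤ ε |S|² / 2`, i.e. `|T| ≥ |S| / √2 ≥ (ε / 2) ^ d n / √2`; this is at least
`ε ^ (3d) n` as soon as `d ≥ 1/2`.

Smaller `d` cannot occur unless `|H| = 1` (and then `ind_H(G) ≥ |G|` forces `G` to be empty):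
for `ε ^ d = 0.64` the weak hypothesis applies to the 5-cycle, as `ind_H(C₅) ≤ 10 · 3 ^ (|H| - 2)
≤ 3.2 ^ |H|`, but every set of at least `3.2` vertices of `C₅` has half of its pairs adjacent and
half non-adjacent.
-/

/-- Number of neighbours of `v` inside the set `S`. -/
noncomputable def degIn {V : Type*} (G : SimpleGraph V) (S : Set V) (v : V) : ℕ :=
  Nat.card {u : V // u ∈ S ∧ G.Adj v u}

/-- `S` is `ε`-restricted in `G`: one of `G[S]`, its complement, has maximum degree
at most `ε·|S|`. -/
def EpsRestricted {V : Type*} (G : SimpleGraph V) (S : Finset V) (ε : ℝ) : Prop :=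
  (∀ v ∈ S, (degIn G (↑S) v : ℝ) ≤ ε * S.card) ∨
    (∀ v ∈ S, (degIn Gᶜ (↑S) v : ℝ) ≤ ε * S.card)

/-- `f` is a copy of `H` in `G`. -/
def IsCopy {W V : Type*} (H : SimpleGraph W) (G : SimpleGraph V) (f : W → V) : Prop :=
  Function.Injective f ∧ ∀ a b, G.Adj (f a) (f b) ↔ H.Adj a b

/-- The number of copies of `H` in `G`. -/
noncomputable def ind {W V : Type*} (H : SimpleGraph W) (G : SimpleGraph V) : ℕ :=
  Nat.card {f : W → V // IsCopy H G f}

/-- Ordered adjacent pairs inside `A × B` (an edge within a set is counted twice). -/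
noncomputable def ePairs {V : Type*} (G : SimpleGraph V) (A B : Set V) : ℕ :=
  Nat.card {p : V × V // p.1 ∈ A ∧ p.2 ∈ B ∧ G.Adj p.1 p.2}

open Finset SimpleGraph

def IsWeakViralExponent {W : Type*} [Fintype W] (H : SimpleGraph W) (d : ℝ) : Prop :=
  ∀ (n : ℕ) (G : SimpleGraph (Fin n)) (ε : ℝ), 0 < ε → ε < 1/2 →
    (ind H G : ℝ) ≤ (ε ^ d * n) ^ (Fintype.card W) →
    ∃ S : Finset (Fin n), ε ^ d * n ≤ (S.card : ℝ) ∧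
      ((ePairs G (↑S) (↑S) : ℝ) ≤ 2 * ε * (S.card.choose 2) ∨
       (ePairs Gᶜ (↑S) (↑S) : ℝ) ≤ 2 * ε * (S.card.choose 2))

section DegreeDeletion

variable {V : Type*} (G : SimpleGraph V)

lemma degIn_eq_card_filter [DecidableRel G.Adj] (S : Finset V) (v : V) :
    degIn G S v = #{u ∈ S | G.Adj v u} := by
  rw [degIn, ← Nat.card_eq_finsetCard]
  exact Nat.card_congr (Equiv.subtypeEquivRight fun u => by simp)

lemma ePairs_eq_card_filter [DecidableRel G.Adj] (S : Finset V) :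
    ePairs G S S = #{p ∈ S ×ˢ S | G.Adj p.1 p.2} := by
  rw [ePairs, ← Nat.card_eq_finsetCard]
  exact Nat.card_congr (Equiv.subtypeEquivRight fun p => by simp [and_assoc])

lemma ePairs_eq_ePairs_erase_add [DecidableRel G.Adj] [DecidableEq V] {S : Finset V} {v : V}
    (hv : v ∈ S) :
    ePairs G S S = ePairs G (S.erase v) (S.erase v) + 2 * degIn G S v := by
  have hv' : v ∉ S.erase v := notMem_erase v S
  rw [← insert_erase hv]
  simp only [ePairs_eq_card_filter, degIn_eq_card_filter, card_filter, sum_product,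
    sum_insert hv', erase_insert hv', G.irrefl, if_false, G.adj_comm _ v, sum_add_distrib]
  ring

lemma exists_subset_forall_degIn_le {ε : ℝ} (hε : 0 ≤ ε) (S : Finset V) :
    ∃ T ⊆ S, (∀ v ∈ T, (degIn G T v : ℝ) ≤ ε * #T) ∧
      ε * ((#S : ℝ) ^ 2 - (#T : ℝ) ^ 2) ≤ ePairs G S S := by
  classical
  induction S using Finset.strongInduction with
  | H S ih =>
    by_cases hgood : ∀ v ∈ S, (degIn G S v : ℝ) ≤ ε * #S
    · exact ⟨S, subset_rfl, hgood, by simp⟩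
    push Not at hgood
    obtain ⟨v, hv, hbad⟩ := hgood
    obtain ⟨T, hTS, hT, hcount⟩ := ih _ (erase_ssubset hv)
    refine ⟨T, hTS.trans (erase_subset _ _), hT, ?_⟩
    have hS : (1 : ℝ) ≤ #S := by exact_mod_cast card_pos.2 ⟨v, hv⟩
    rw [cast_card_erase_of_mem hv] at hcount
    rw [ePairs_eq_ePairs_erase_add G hv, Nat.cast_add, Nat.cast_mul, Nat.cast_two]
    nlinarith

lemma exists_subset_forall_degIn_le_of_ePairs_le {ε : ℝ} (hε : 0 < ε) {S : Finset V}
    (hS : (ePairs G S S : ℝ) ≤ ε * (#S).choose 2) :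
    ∃ T ⊆ S, (∀ v ∈ T, (degIn G T v : ℝ) ≤ ε * #T) ∧ (#S : ℝ) ^ 2 ≤ 2 * (#T : ℝ) ^ 2 := by
  obtain ⟨T, hTS, hT, hcount⟩ := exists_subset_forall_degIn_le G hε.le S
  refine ⟨T, hTS, hT, ?_⟩
  have hchoose : ((#S).choose 2 : ℝ) ≤ (#S : ℝ) ^ 2 / 2 := by
    rw [Nat.cast_choose_two]
    nlinarith [(#S).cast_nonneg (α := ℝ)]
  nlinarith

lemma exists_epsRestricted_of_ePairs_le {ε : ℝ} (hε : 0 < ε) {S : Finset V}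
    (hS : (ePairs G S S : ℝ) ≤ ε * (#S).choose 2 ∨ (ePairs Gᶜ S S : ℝ) ≤ ε * (#S).choose 2) :
    ∃ T ⊆ S, (#S : ℝ) ^ 2 ≤ 2 * (#T : ℝ) ^ 2 ∧ EpsRestricted G T ε := by
  rcases hS with hS | hS
  · obtain ⟨T, hTS, hT, hcard⟩ := exists_subset_forall_degIn_le_of_ePairs_le G hε hS
    exact ⟨T, hTS, hcard, .inl hT⟩
  · obtain ⟨T, hTS, hT, hcard⟩ := exists_subset_forall_degIn_le_of_ePairs_le Gᶜ hε hS
    exact ⟨T, hTS, hcard, .inr hT⟩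

end DegreeDeletion

lemma two_mul_sq_rpow_three_mul_le {ε d : ℝ} (hε : 0 < ε) (hε2 : ε < 1/2) (hd : 1/2 ≤ d) :
    2 * (ε ^ (3 * d)) ^ 2 ≤ ((ε / 2) ^ d) ^ 2 := by
  set q := 1 / (2 * ε ^ 2)
  have hq : 2 ≤ q := by
    rw [le_div_iff₀ (by positivity)]
    nlinarith
  have hsplit : (ε / 2) ^ d = ε ^ (3 * d) * q ^ d := by
    rw [Real.rpow_mul hε.le, ← Real.mul_rpow (by positivity) (by positivity), Real.rpow_ofNat]
    congr 1
    simp only [q]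
    field_simp
  have hq2 : 2 ≤ (q ^ d) ^ 2 := by
    rw [← Real.rpow_natCast, ← Real.rpow_mul (by positivity)]
    calc (2 : ℝ) ≤ q ^ (1 : ℝ) := by rwa [Real.rpow_one]
      _ ≤ q ^ (d * (2 : ℕ)) :=
        Real.rpow_le_rpow_of_exponent_le (by linarith) (by push_cast; linarith)
  rw [hsplit, mul_pow]
  nlinarith [sq_nonneg (ε ^ (3 * d))]

section Copies

variable {W V : Type*} [Fintype W] (H : SimpleGraph W) (G : SimpleGraph V)

lemma card_le_ind_of_card_eq_one [Finite V] (hW : Fintype.card W = 1) : Nat.card V ≤ ind H G := by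
  have : Subsingleton W := Fintype.card_le_one_iff_subsingleton.1 hW.le
  obtain ⟨a⟩ : Nonempty W := Fintype.card_pos_iff.1 (by omega)
  refine Nat.card_le_card_of_injective
    (fun x => ⟨fun _ => x, fun _ _ _ => Subsingleton.elim _ _, fun u w => ?_⟩)
    fun x y h => congrFun (congrArg Subtype.val h) a
  simp [Subsingleton.elim u w]

lemma ind_le_card_mul_pow [Fintype V] [DecidableEq V] {a b : W} (hab : a ≠ b)
    (t : Finset (V × V)) (ht : ∀ f, IsCopy H G f → (f a, f b) ∈ t) :
    ind H G ≤ #t * (Fintype.card V - 2) ^ (Fintype.card W - 2) := by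
  classical
  rw [ind, Nat.card_eq_fintype_card, Fintype.card_subtype, mul_comm]
  refine card_le_mul_card_image_of_maps_to (f := fun f => (f a, f b))
    (fun f hf => ht f (mem_filter.1 hf).2) _ fun ⟨x, y⟩ _ => ?_
  rcases eq_or_ne x y with rfl | hxy
  · refine (card_eq_zero.2 (filter_eq_empty_iff.2 fun f hf hfx => ?_)).trans_le (Nat.zero_le _)
    simp only [Prod.mk.injEq] at hfx
    exact hab ((mem_filter.1 hf).2.1 (hfx.1.trans hfx.2.symm))
  calc #{f ∈ univ.filter (IsCopy H G) | (f a, f b) = (x, y)}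
      ≤ #(Fintype.piFinset fun _ : ↥({a, b}ᶜ : Finset W) => ({x, y}ᶜ : Finset V)) := by
        refine card_le_card_of_injOn (fun f c => f c) (fun f hf => ?_) fun f hf g hg hfg => ?_
        · obtain ⟨hf, hfxy⟩ := mem_filter.1 hf
          obtain ⟨hfa, hfb⟩ := Prod.mk.inj hfxy
          refine Fintype.mem_piFinset.2 fun c => ?_
          have hc : c.1 ≠ a ∧ c.1 ≠ b := by simpa [not_or] using c.2
          simp only [mem_compl, mem_insert, mem_singleton, not_or, ← hfa, ← hfb]
          exact ⟨(mem_filter.1 hf).2.1.ne hc.1, (mem_filter.1 hf).2.1.ne hc.2⟩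
        · obtain ⟨hfa, hfb⟩ := Prod.mk.inj (mem_filter.1 hf).2
          obtain ⟨hga, hgb⟩ := Prod.mk.inj (mem_filter.1 hg).2
          funext c
          by_cases hca : c = a
          · rw [hca, hfa, hga]
          by_cases hcb : c = b
          · rw [hcb, hfb, hgb]
          exact congrFun hfg ⟨c, by simp [hca, hcb]⟩
    _ = _ := by
      simp only [Fintype.card_piFinset, prod_const, card_univ, Fintype.card_coe, card_compl,
        card_pair hxy, card_pair hab]

end Copies

lemma cycleGraph_five_choose_two_le : ∀ S : Finset (Fin 5), 4 ≤ #S →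
    (#S).choose 2 ≤ #{p ∈ S ×ˢ S | (cycleGraph 5).Adj p.1 p.2} ∧
    (#S).choose 2 ≤ #{p ∈ S ×ˢ S | (cycleGraph 5)ᶜ.Adj p.1 p.2} := by
  decide

lemma ind_cycleGraph_five_le {W : Type*} [Fintype W] (H : SimpleGraph W)
    (hW : Fintype.card W ≠ 1) : (ind H (cycleGraph 5) : ℝ) ≤ 3.2 ^ Fintype.card W := by
  rcases Nat.lt_or_ge (Fintype.card W) 2 with hW0 | hW2
  · have : IsEmpty W := Fintype.card_eq_zero_iff.1 (by omega)
    have : ind H (cycleGraph 5) ≤ 1 := Finite.card_le_one_iff_subsingleton.2 inferInstance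
    simpa [Fintype.card_eq_zero] using (Nat.cast_le (α := ℝ)).2 this
  obtain ⟨a, b, hab⟩ := Fintype.exists_pair_of_one_lt_card hW2
  have hcount : ind H (cycleGraph 5) ≤ 10 * 3 ^ (Fintype.card W - 2) := by
    by_cases hadj : H.Adj a b
    · have h10 : #{p : Fin 5 × Fin 5 | (cycleGraph 5).Adj p.1 p.2} = 10 := by decide
      have := ind_le_card_mul_pow H (cycleGraph 5) hab
        {p | (cycleGraph 5).Adj p.1 p.2} fun f hf => by simpa [hf.2 a b] using hadj
      rwa [h10, Fintype.card_fin] at this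
    · have h10 : #{p : Fin 5 × Fin 5 | (cycleGraph 5)ᶜ.Adj p.1 p.2} = 10 := by decide
      have := ind_le_card_mul_pow H (cycleGraph 5) hab
        {p | (cycleGraph 5)ᶜ.Adj p.1 p.2} fun f hf => by simpa [hf.2 a b, hf.1.ne hab] using hadj
      rwa [h10, Fintype.card_fin] at this
  obtain ⟨k, hk⟩ := Nat.exists_eq_add_of_le' hW2
  rw [hk, Nat.add_sub_cancel] at hcount
  calc (ind H (cycleGraph 5) : ℝ) ≤ 10 * 3 ^ k := by exact_mod_cast hcount
    _ ≤ 3.2 ^ 2 * 3.2 ^ k := by gcongr <;> norm_num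
    _ = 3.2 ^ Fintype.card W := by rw [hk, pow_add, mul_comm]

lemma one_half_le_of_isWeakViralExponent {W : Type*} [Fintype W] {H : SimpleGraph W} {d : ℝ}
    (hW : Fintype.card W ≠ 1) (hd : 0 < d) (h : IsWeakViralExponent H d) : 1/2 ≤ d := by
  by_contra! hd2
  set e := (0.64 : ℝ) ^ (1 / d)
  have he : e ^ d = 0.64 := by
    rw [← Real.rpow_mul (by norm_num), one_div_mul_cancel hd.ne', Real.rpow_one]
  have he2 : e < 1/2 := by
    have : e ≤ (0.64 : ℝ) ^ (2 : ℝ) := Real.rpow_le_rpow_of_exponent_ge (by norm_num) (by norm_num)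
      (by rw [le_div_iff₀ hd]; linarith)
    norm_num at this
    linarith
  obtain ⟨S, hS, hsparse⟩ := h 5 (cycleGraph 5) e (by positivity) he2 (by
    convert ind_cycleGraph_five_le H hW using 2
    rw [he]
    norm_num)
  rw [he] at hS
  have h4 : 4 ≤ #S := by
    by_contra! h3
    have : (#S : ℝ) ≤ 3 := by exact_mod_cast Nat.le_of_lt_succ h3
    norm_num at hS
    linarith
  obtain ⟨hadj, hnonadj⟩ := cycleGraph_five_choose_two_le S h4
  have hc : (0 : ℝ) < (#S).choose 2 := by exact_mod_cast Nat.choose_pos (by omega)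
  rw [ePairs_eq_card_filter, ePairs_eq_card_filter] at hsparse
  rcases hsparse with hG | hGc
  · nlinarith [Nat.cast_le (α := ℝ) |>.2 hadj]
  · nlinarith [Nat.cast_le (α := ℝ) |>.2 hnonadj]

lemma exists_epsRestricted_of_isWeakViralExponent {W : Type*} [Fintype W] {H : SimpleGraph W}
    {d : ℝ} (hd : 1/2 ≤ d) (h : IsWeakViralExponent H d) {n : ℕ} (G : SimpleGraph (Fin n))
    {ε : ℝ} (hε : 0 < ε) (hε2 : ε < 1/2)
    (hind : (ind H G : ℝ) ≤ (ε ^ (3 * d) * n) ^ (Fintype.card W)) :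
    ∃ S : Finset (Fin n), ε ^ (3 * d) * n ≤ (S.card : ℝ) ∧ EpsRestricted G S ε := by
  have hsq := two_mul_sq_rpow_three_mul_le hε hε2 hd
  have hle : ε ^ (3 * d) ≤ (ε / 2) ^ d :=
    (pow_le_pow_iff_left₀ (by positivity) (by positivity) two_ne_zero).1 (by nlinarith)
  obtain ⟨S, hS, hsparse⟩ := h n G (ε / 2) (by positivity) (by linarith) (hind.trans (by gcongr))
  obtain ⟨T, -, hST, hT⟩ := exists_epsRestricted_of_ePairs_le G hε (S := S) (by
    convert hsparse using 2 <;> ring)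
  refine ⟨T, (pow_le_pow_iff_left₀ (by positivity) (by positivity) two_ne_zero).1 ?_, hT⟩
  have hSn : ((ε / 2) ^ d * n) ^ 2 ≤ (#S : ℝ) ^ 2 := by gcongr
  nlinarith [sq_nonneg (n : ℝ)]

/-- If `d > 0` is a weak viral exponent for `{H}` (for every `ε ∈ (0,1/2)` and graph `G`
with `ind_H(G) ≤ (ε^d|G|)^{|H|}` there is `S` with `|S| ≥ ε^d|G|` such that one of
`G[S]`, its complement, has at most `ε·(|S| choose 2)` edges), then `3d` is a viral
exponent for `{H}`. -/
theorem stmt_4 {W : Type*} [Fintype W] (H : SimpleGraph W) (d : ℝ) (hd : 0 < d)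
    (hweak : ∀ (n : ℕ) (G : SimpleGraph (Fin n)) (ε : ℝ), 0 < ε → ε < 1/2 →
      (ind H G : ℝ) ≤ (ε ^ d * n) ^ (Fintype.card W) →
      ∃ S : Finset (Fin n), ε ^ d * n ≤ (S.card : ℝ) ∧
        ((ePairs G (↑S) (↑S) : ℝ) ≤ 2 * ε * (S.card.choose 2) ∨
         (ePairs Gᶜ (↑S) (↑S) : ℝ) ≤ 2 * ε * (S.card.choose 2))) :
    ∀ (n : ℕ) (G : SimpleGraph (Fin n)) (ε : ℝ), 0 < ε → ε < 1/2 →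
      (ind H G : ℝ) ≤ (ε ^ (3 * d) * n) ^ (Fintype.card W) →
      ∃ S : Finset (Fin n), ε ^ (3 * d) * n ≤ (S.card : ℝ) ∧ EpsRestricted G S ε := by
  intro n G ε hε hε2 hind
  by_cases hW : Fintype.card W = 1
  · have hn : n = 0 := by
      have hcopies : (n : ℝ) ≤ ε ^ (3 * d) * n := by
        simpa [hW] using (Nat.cast_le.2 (card_le_ind_of_card_eq_one H G hW)).trans hind
      have : ε ^ (3 * d) < 1 := Real.rpow_lt_one hε.le (by linarith) (by positivity)
      by_contra hn
      have : (0 : ℝ) < n := by positivity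
      nlinarith
    subst hn
    exact ⟨∅, by simp, .inl (by simp)⟩
  exact exists_epsRestricted_of_isWeakViralExponent
    (one_half_le_of_isWeakViralExponent hW hd hweak) hweak G hε hε2 hind
end

section
/- For every integer h ≥ 4 there exists a prime graph H in the class 𝓗 with exactly h vertices, where 𝓗 is the class of graphs all of whose prime induced subgraphs H' with at least 3 vertices have both a vertex of degree 1 and a vertex of degree |H'|−2. Specifically: P₄ and the bull are prime members of 𝓗, and if H ∈ 𝓗 is prime with a degree-one vertex v adjacent to u, then the graph obtained from H by adding one new vertex adjacent to all of V(H) and another new vertex adjacent only to u is a prime member of 𝓗 with |H|+2 vertices. -/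
/-- All vertices of `S` have the same neighbourhood outside `S`. -/
def SameNbhdOutside {V : Type*} (G : SimpleGraph V) (S : Set V) : Prop :=
  ∀ u ∈ S, ∀ v ∈ S, ∀ w ∉ S, (G.Adj u w ↔ G.Adj v w)

/-- `G` is prime: no proper subset `S` of the vertices with `|S| ≥ 2` is a homogeneous
set (all of whose members have the same neighbourhood outside `S`). -/
def GraphPrime {V : Type*} (G : SimpleGraph V) : Prop :=
  ¬ ∃ S : Set V, 2 ≤ S.ncard ∧ S ≠ Set.univ ∧ SameNbhdOutside G S

/-- The degree of a vertex. -/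
noncomputable def idegree {V : Type*} (G : SimpleGraph V) (v : V) : ℕ :=
  Nat.card (G.neighborSet v)

/-- `G ∈ 𝓗`: every prime induced subgraph on at least 3 vertices has a vertex of
degree one and a vertex of degree (number of vertices minus 2). -/
def InH {V : Type*} (G : SimpleGraph V) : Prop :=
  ∀ S : Set V, 3 ≤ S.ncard → GraphPrime (G.induce S) →
    (∃ x, idegree (G.induce S) x = 1) ∧ (∃ x, idegree (G.induce S) x = S.ncard - 2)

/-!
P₄ and the bull are checked by computation; larger sizes are reached two vertices at a time.
Let `G` be prime in 𝓗 with a pendant vertex `v` whose neighbour is `u`; add an apex `x`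
adjacent to all old vertices and a new pendant vertex `y` at `u`.

Let `S` be a nontrivial homogeneous set of the new graph. If `y ∈ S` and `x ∉ S`, then `x`
separates `y` from every old vertex, so `S = {y}`. If `x, y ∈ S`, the vertices outside `S` are
adjacent to `x`, hence to `y`, so only `u` lies outside, and `u` would be universal in `G`. If
`x ∈ S` and `y ∉ S`, the old part of `S` is nonempty, proper, and complete to the other old
vertices. If `x, y ∉ S`, then `S` is homogeneous in `G`, and proper since `y` separates `u` from
the rest. Primality of `G` excludes each case.

For membership in 𝓗, take a prime induced subgraph on `S`, `|S| ≥ 3`. A vertex of a prime graph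
has a neighbour and a non-neighbour, so `x ∈ S` forces `y ∈ S`, and `y ∈ S` forces `u ∈ S`; then
`y` has degree 1 and `x` degree `|S| - 2`. If `x ∉ S`, then `v` and `y` cannot both lie in `S`
(they would be false twins), so the subgraph embeds into `G` by sending `y` to `v`, and
𝓗 is closed under induced subgraphs.
-/

open SimpleGraph

section Prime

variable {V W : Type*} {G : SimpleGraph V} {G' : SimpleGraph W}

theorem GraphPrime.iso (hG : GraphPrime G) (e : G ≃g G') : GraphPrime G' := by
  rintro ⟨S, h2, hne, hS⟩
  refine hG ⟨e ⁻¹' S, ?_, fun h => hne (Set.eq_univ_of_forall fun w => ?_),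
    fun a ha b hb w hw => ?_⟩
  · rwa [Set.ncard_preimage_of_injective_subset_range e.injective (by simp)]
  · simpa using (h ▸ Set.mem_univ (e.symm w) : e.symm w ∈ e ⁻¹' S)
  · simpa only [e.map_adj_iff] using hS _ ha _ hb _ hw

theorem GraphPrime.exists_adj_and_not_adj (hG : GraphPrime G) (h3 : 3 ≤ Nat.card V) (a : V) :
    ∃ z w, z ≠ a ∧ w ≠ a ∧ G.Adj z a ∧ ¬ G.Adj w a := by
  have : Finite V := Nat.finite_of_card_ne_zero (by omega)
  by_contra! h
  refine hG ⟨{a}ᶜ, ?_, Set.compl_ne_univ.mpr (Set.singleton_nonempty a), fun p hp q hq w hw => ?_⟩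
  · rw [Set.ncard_compl, Set.ncard_singleton]; omega
  · obtain rfl : w = a := by simpa using hw
    exact ⟨h p q hp hq, h q p hq hp⟩

theorem GraphPrime.eq_of_neighborSet_eq (hG : GraphPrime G) (h3 : 3 ≤ Nat.card V) {p q : V}
    (h : G.neighborSet p = G.neighborSet q) : p = q := by
  have : Finite V := Nat.finite_of_card_ne_zero (by omega)
  by_contra hpq
  have hN : ∀ c ∈ ({p, q} : Set V), G.neighborSet c = G.neighborSet p := by
    rintro c (rfl | rfl)
    exacts [rfl, h.symm]
  refine hG ⟨{p, q}, (Set.ncard_pair hpq).ge, fun hu => ?_, fun a ha b hb w _ => ?_⟩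
  · have := Set.ncard_pair hpq
    rw [hu, Set.ncard_univ] at this
    omega
  · rw [← mem_neighborSet, ← mem_neighborSet, hN a ha, hN b hb]

theorem GraphPrime.exists_not_adj_of_ne_univ (hG : GraphPrime G) (h3 : 3 ≤ Nat.card V)
    {S : Set V} (hne : S.Nonempty) (hS : S ≠ Set.univ) : ∃ s ∈ S, ∃ w ∉ S, ¬ G.Adj s w := by
  have : Finite V := Nat.finite_of_card_ne_zero (by omega)
  by_contra! hadj
  rcases Nat.lt_or_ge S.ncard 2 with h1 | h2
  · obtain ⟨z, rfl⟩ : ∃ z, S = {z} :=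
      Set.ncard_eq_one.mp (by have := (Set.ncard_pos (Set.toFinite S)).mpr hne; omega)
    obtain ⟨-, w, -, hwz, -, hw⟩ := hG.exists_adj_and_not_adj h3 z
    exact hw (hadj z rfl w hwz).symm
  · exact hG ⟨S, h2, hS, fun a ha b hb w hw => iff_of_true (hadj a ha w hw) (hadj b hb w hw)⟩

end Prime

section ClassH

variable {V W : Type*} {G : SimpleGraph V} {G' : SimpleGraph W}

/-- A copendant vertex, of degree `Nat.card V - 2`, is a pendant vertex of the complement. -/
def HasPendantAndCopendant (G : SimpleGraph V) : Prop :=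
  (∃ x, idegree G x = 1) ∧ ∃ x, idegree G x = Nat.card V - 2

theorem inH_iff : InH G ↔ ∀ S : Set V, 3 ≤ S.ncard → GraphPrime (G.induce S) →
    HasPendantAndCopendant (G.induce S) := by
  simp only [InH, HasPendantAndCopendant, Nat.card_coe_set_eq]

theorem idegree_iso (e : G ≃g G') (a : V) : idegree G' (e a) = idegree G a :=
  Nat.card_congr (e.mapNeighborSet a).symm

theorem idegree_eq_degree (G : SimpleGraph V) (v : V) [Fintype (G.neighborSet v)] :
    idegree G v = G.degree v := by
  rw [idegree, Nat.card_eq_fintype_card, card_neighborSet_eq_degree]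

theorem idegree_eq_one_of_forall_adj_iff {x u : V} (h : ∀ w, G.Adj x w ↔ w = u) :
    idegree G x = 1 := by
  rw [idegree, show G.neighborSet x = {u} from Set.ext h, Nat.card_coe_set_eq,
    Set.ncard_singleton]

theorem idegree_eq_card_sub_two [Finite V] {x y : V} (hxy : x ≠ y)
    (h : ∀ w, G.Adj x w ↔ w ≠ x ∧ w ≠ y) : idegree G x = Nat.card V - 2 := by
  rw [idegree, show G.neighborSet x = {x, y}ᶜ by ext w; simpa using h w, Nat.card_coe_set_eq,
    Set.ncard_compl, Set.ncard_pair hxy]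

theorem HasPendantAndCopendant.iso (h : HasPendantAndCopendant G) (e : G ≃g G') :
    HasPendantAndCopendant G' := by
  obtain ⟨⟨x, hx⟩, y, hy⟩ := h
  exact ⟨⟨e x, by rw [idegree_iso, hx]⟩, e y, by rw [idegree_iso, hy, Nat.card_congr e.toEquiv]⟩

theorem InH.hasPendantAndCopendant (hG : InH G) (f : G' ↪g G) (h3 : 3 ≤ Nat.card W)
    (hp : GraphPrime G') : HasPendantAndCopendant G' := by
  let e := f.isoInduceRange
  have hcard : Nat.card W = (Set.range f).ncard := by
    rw [← Nat.card_coe_set_eq]; exact Nat.card_congr e.toEquiv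
  exact (inH_iff.mp hG _ (hcard ▸ h3) (hp.iso e)).iso e.symm

theorem InH.of_embedding (hG : InH G) (f : G' ↪g G) : InH G' :=
  inH_iff.mpr fun S h3 hp =>
    hG.hasPendantAndCopendant (f.comp (Embedding.induce S)) (by rwa [Nat.card_coe_set_eq]) hp

end ClassH

section AddApexPendant

variable {V : Type*} {G : SimpleGraph V} {u v : V}

/-- `none` is the new vertex adjacent to every old vertex, `some none` the new vertex
adjacent only to `u`, and `some (some a)` is the old vertex `a`. -/
def addApexPendant (G : SimpleGraph V) (u : V) : SimpleGraph (Option (Option V)) where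
  Adj
    | some (some a), some (some b) => G.Adj a b
    | none, some (some _) | some (some _), none => True
    | some none, some (some a) | some (some a), some none => a = u
    | _, _ => False
  symm := ⟨by
    rintro (_ | _ | a) (_ | _ | b) h <;> simp_all [G.adj_comm]⟩
  loopless := ⟨by
    rintro (_ | _ | a) h <;> simp_all⟩

@[simp] theorem addApexPendant_adj_old_old {a b : V} :
    (addApexPendant G u).Adj (some (some a)) (some (some b)) ↔ G.Adj a b := Iff.rfl

@[simp] theorem addApexPendant_adj_apex_old (a : V) :
    (addApexPendant G u).Adj none (some (some a)) := trivial

@[simp] theorem addApexPendant_adj_pendant_old {a : V} :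
    (addApexPendant G u).Adj (some none) (some (some a)) ↔ a = u := Iff.rfl

@[simp] theorem addApexPendant_adj_old_pendant {a : V} :
    (addApexPendant G u).Adj (some (some a)) (some none) ↔ a = u := Iff.rfl

@[simp] theorem addApexPendant_not_adj_apex_pendant :
    ¬ (addApexPendant G u).Adj none (some none) := id

@[simp] theorem addApexPendant_not_adj_pendant_apex :
    ¬ (addApexPendant G u).Adj (some none) none := id

theorem addApexPendant_adj_pendant {w : Option (Option V)} :
    (addApexPendant G u).Adj (some none) w ↔ w = some (some u) := by
  rcases w with _ | _ | a <;> simp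

theorem addApexPendant_adj_apex {w : Option (Option V)} :
    (addApexPendant G u).Adj none w ↔ w ≠ none ∧ w ≠ some none := by
  rcases w with _ | _ | a <;> simp

theorem graphPrime_addApexPendant (hG : GraphPrime G) (h3 : 3 ≤ Nat.card V) :
    GraphPrime (addApexPendant G u) := by
  rintro ⟨S, h2, hne, hS⟩
  by_cases hx : none ∈ S <;> by_cases hy : some none ∈ S
  · obtain ⟨w, hw⟩ := (Set.ne_univ_iff_exists_notMem S).mp hne
    have hout : ∀ a, some (some a) ∉ S → a = u := fun a ha =>
      addApexPendant_adj_pendant_old.mp ((hS none hx (some none) hy _ ha).mp trivial)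
    obtain ⟨-, z, -, hzu, -, hz⟩ := hG.exists_adj_and_not_adj h3 u
    rcases w with _ | _ | a
    · exact hw hx
    · exact hw hy
    obtain rfl := hout a hw
    have hzS : some (some z) ∈ S := by_contra fun h => hzu (hout z h)
    exact hz ((hS none hx _ hzS _ hw).mp trivial)
  · have huS : some (some u) ∉ S := fun hu =>
      addApexPendant_not_adj_apex_pendant ((hS _ hu none hx _ hy).mp (by simp))
    obtain ⟨s, hs, hsx⟩ := Set.exists_ne_of_one_lt_ncard h2 none
    rcases s with _ | _ | a
    · exact hsx rfl
    · exact hy hs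
    obtain ⟨b, hb, w, hw, hbw⟩ := hG.exists_not_adj_of_ne_univ h3 (S := some ∘ some ⁻¹' S)
      ⟨a, hs⟩ fun h => huS (h ▸ Set.mem_univ u : u ∈ some ∘ some ⁻¹' S)
    exact hbw ((hS none hx _ hb _ hw).mp trivial)
  · obtain ⟨s, hs, hsy⟩ := Set.exists_ne_of_one_lt_ncard h2 (some none)
    rcases s with _ | _ | a
    · exact hx hs
    · exact hsy rfl
    exact addApexPendant_not_adj_pendant_apex ((hS _ hs _ hy none hx).mp trivial)
  · have hold : S ⊆ Set.range (some ∘ some) := by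
      rintro (_ | _ | a) hs
      exacts [absurd hs hx, absurd hs hy, ⟨a, rfl⟩]
    refine hG ⟨some ∘ some ⁻¹' S, ?_, fun h => ?_, fun a ha b hb w hw => hS _ ha _ hb _ hw⟩
    · rwa [Set.ncard_preimage_of_injective_subset_range
        (Option.some_injective _ |>.comp (Option.some_injective _)) hold]
    · have hu : some (some u) ∈ S := (h ▸ Set.mem_univ u : u ∈ some ∘ some ⁻¹' S)
      obtain ⟨s, hs, hsu⟩ := Set.exists_ne_of_one_lt_ncard h2 (some (some u))
      obtain ⟨a, rfl⟩ := hold hs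
      have hau : a = u := by simpa using (hS _ hu _ hs _ hy).mp (by simp)
      exact hsu (by simp [hau])

theorem nonempty_embedding_induce_addApexPendant (hv : ∀ w, G.Adj v w ↔ w = u)
    {S : Set (Option (Option V))} (hx : none ∉ S) (hyv : some none ∈ S → some (some v) ∉ S) :
    Nonempty ((addApexPendant G u).induce S ↪g G) := by
  -- `y ↦ v` and `some (some a) ↦ a`; the apex, not in `S`, also goes to `v`.
  let f : S → V := fun s => (s : Option (Option V)).join.getD v
  have hinj : f.Injective := by
    rintro ⟨_ | _ | a, ha⟩ ⟨_ | _ | b, hb⟩ h <;> simp_all [f, eq_comm]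
  have hadj : ∀ s t, G.Adj (f s) (f t) ↔ ((addApexPendant G u).induce S).Adj s t := by
    rintro ⟨_ | _ | a, ha⟩ ⟨_ | _ | b, hb⟩ <;> simp_all [f, G.adj_comm _ v]
  exact ⟨⟨⟨f, hinj⟩, hadj _ _⟩⟩

theorem inH_addApexPendant (hG : InH G) (hv : ∀ w, G.Adj v w ↔ w = u) :
    InH (addApexPendant G u) := by
  refine inH_iff.mpr fun S h3 hp => ?_
  have h3' : 3 ≤ Nat.card S := by rwa [Nat.card_coe_set_eq]
  have hu : some none ∈ S → some (some u) ∈ S := fun hy => by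
    obtain ⟨⟨z, hz⟩, -, -, -, hzy, -⟩ := hp.exists_adj_and_not_adj h3' ⟨some none, hy⟩
    rwa [← addApexPendant_adj_pendant.mp hzy.symm]
  by_cases hx : none ∈ S
  · have hy : some none ∈ S := by
      obtain ⟨-, ⟨w, hw⟩, -, hwx, -, hw'⟩ := hp.exists_adj_and_not_adj h3' ⟨none, hx⟩
      rcases w with _ | _ | a
      · exact absurd rfl hwx
      · exact hw
      · exact (hw' trivial).elim
    have : Finite S := Nat.finite_of_card_ne_zero (by omega)
    refine ⟨⟨⟨some none, hy⟩, idegree_eq_one_of_forall_adj_iff (u := ⟨_, hu hy⟩) fun w => ?_⟩,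
      ⟨none, hx⟩, idegree_eq_card_sub_two (y := ⟨some none, hy⟩) (by simp) fun w => ?_⟩
    · simp [addApexPendant_adj_pendant, Subtype.ext_iff]
    · simp [addApexPendant_adj_apex, Subtype.ext_iff]
  · obtain ⟨f⟩ := nonempty_embedding_induce_addApexPendant hv hx fun hy hvS => by
      -- `y` and `v` would be false twins, both adjacent exactly to `u`.
      have hvu : v ≠ u := fun h => G.loopless.irrefl v ((hv v).mpr h)
      have := hp.eq_of_neighborSet_eq h3' (p := ⟨some none, hy⟩) (q := ⟨some (some v), hvS⟩) <| by
        ext ⟨_ | _ | a, hw⟩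
        · exact absurd hw hx
        · simp [hvu]
        · simp [hv]
      simp at this
    exact hG.hasPendantAndCopendant f h3' hp

end AddApexPendant

section Decidable

variable {V : Type*} [Fintype V] (G : SimpleGraph V)

theorem graphPrime_iff_finset : GraphPrime G ↔ ¬ ∃ s : Finset V, 2 ≤ s.card ∧ s ≠ Finset.univ ∧
    ∀ a ∈ s, ∀ b ∈ s, ∀ w ∉ s, (G.Adj a w ↔ G.Adj b w) := by
  classical
  rw [GraphPrime, not_iff_not]
  constructor
  · rintro ⟨S, h2, hne, hS⟩
    exact ⟨S.toFinset, by rwa [← Set.ncard_eq_toFinset_card'], by simpa using hne,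
      by simpa [SameNbhdOutside] using hS⟩
  · rintro ⟨s, h2, hne, hs⟩
    exact ⟨s, by rwa [Set.ncard_coe_finset], by simpa using hne, hs⟩

instance [DecidableEq V] [DecidableRel G.Adj] : Decidable (GraphPrime G) :=
  decidable_of_iff _ (graphPrime_iff_finset G).symm

theorem inH_iff_finset [DecidableRel G.Adj] :
    InH G ↔ ∀ s : Finset V, 3 ≤ s.card → GraphPrime (G.induce (s : Set V)) →
    (∃ x, (G.induce (s : Set V)).degree x = 1) ∧
      ∃ x, (G.induce (s : Set V)).degree x = s.card - 2 := by
  classical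
  refine ⟨fun h s h3 hp => ?_, fun h S h3 hp => ?_⟩
  · simpa [idegree_eq_degree] using h s (by rwa [Set.ncard_coe_finset]) hp
  · obtain ⟨s, rfl⟩ : ∃ s : Finset V, ↑s = S := ⟨S.toFinset, Set.coe_toFinset S⟩
    rw [Set.ncard_coe_finset] at h3 ⊢
    simpa [idegree_eq_degree] using h _ h3 hp

instance [DecidableEq V] [DecidableRel G.Adj] : Decidable (InH G) :=
  decidable_of_iff _ (inH_iff_finset G).symm

end Decidable

instance {n : ℕ} : DecidableRel (pathGraph n).Adj := fun _ _ => decidable_of_iff' _ pathGraph_adj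

def bull : SimpleGraph (Fin 5) :=
  fromRel fun i j => (i, j) ∈ ({(0, 1), (1, 2), (2, 3), (1, 4), (2, 4)} : Finset (Fin 5 × Fin 5))

instance : DecidableRel bull.Adj := fun _ _ => inferInstanceAs (Decidable (_ ∧ _))

theorem graphPrime_pathGraph_four : GraphPrime (pathGraph 4) := by decide
theorem inH_pathGraph_four : InH (pathGraph 4) := by decide
theorem graphPrime_bull : GraphPrime bull := by decide
theorem inH_bull : InH bull := by decide

theorem exists_graphPrime_inH_pendant (h : ℕ) (h4 : 4 ≤ h) :
    ∃ (V : Type) (G : SimpleGraph V) (v u : V),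
      Nat.card V = h ∧ GraphPrime G ∧ InH G ∧ ∀ w, G.Adj v w ↔ w = u := by
  induction h using Nat.strong_induction_on with
  | _ h ih =>
    rcases (by omega : h = 4 ∨ h = 5 ∨ 6 ≤ h) with rfl | rfl | h6
    · exact ⟨_, pathGraph 4, 0, 1, Nat.card_fin 4, graphPrime_pathGraph_four, inH_pathGraph_four,
        by decide⟩
    · exact ⟨_, bull, 0, 1, Nat.card_fin 5, graphPrime_bull, inH_bull, by decide⟩
    · obtain ⟨V, G, v, u, hcard, hp, hH, hv⟩ := ih (h - 2) (by omega) (by omega)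
      have : Finite V := Nat.finite_of_card_ne_zero (by omega)
      refine ⟨_, addApexPendant G u, some none, some (some u), ?_,
        graphPrime_addApexPendant hp (by omega), inH_addApexPendant hH hv,
        fun _ => addApexPendant_adj_pendant⟩
      rw [Finite.card_option, Finite.card_option]
      omega

/-- For every integer `h ≥ 4` there is a prime graph in `𝓗` with exactly `h` vertices. -/
theorem stmt_5 : ∀ h : ℕ, 4 ≤ h → ∃ G : SimpleGraph (Fin h), GraphPrime G ∧ InH G := by
  intro h h4
  obtain ⟨V, G, -, -, hcard, hp, hH, -⟩ := exists_graphPrime_inH_pendant h h4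
  have : Finite V := Nat.finite_of_card_ne_zero (by omega)
  let e := Iso.map (Finite.equivFinOfCardEq hcard) G
  exact ⟨_, hp.iso e, hH.of_embedding e.symm.toEmbedding⟩
end

section
/- Let 𝓙 be the class of graphs J such that every induced subgraph of J with at least 3 vertices either has a vertex of degree at most one or is not prime, and let 𝓗 be the class of graphs H such that every prime induced subgraph H' of H with at least 3 vertices has a vertex of degree one and a vertex of degree |H'|−2. Then H ∈ 𝓗 if and only if both H ∈ 𝓙 and the complement of H is in 𝓙. -/
/-- `G ∈ 𝓙`: every induced subgraph on at least 3 vertices has a vertex of degree at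
most one, or is not prime. -/
def InJ {V : Type*} (G : SimpleGraph V) : Prop :=
  ∀ S : Set V, 3 ≤ S.ncard →
    (∃ x, idegree (G.induce S) x ≤ 1) ∨ ¬ GraphPrime (G.induce S)

lemma compl_induce {V : Type*} (G : SimpleGraph V) (S : Set V) :
    Gᶜ.induce S = (G.induce S)ᶜ := by
  ext a b
  simp [SimpleGraph.compl_adj, Subtype.ext_iff]

lemma sameNbhdOutside_compl {V : Type*} (G : SimpleGraph V) (S : Set V) :
    SameNbhdOutside Gᶜ S ↔ SameNbhdOutside G S := by
  constructor <;> intro h u hu v hv w hw <;>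
    have := h u hu v hv w hw
  · have hu' : u ≠ w := fun e => hw (e ▸ hu)
    have hv' : v ≠ w := fun e => hw (e ▸ hv)
    simp only [SimpleGraph.compl_adj] at this
    constructor
    · intro ha
      by_contra hna
      exact (this.mpr ⟨hv', hna⟩).2 ha
    · intro ha
      by_contra hna
      exact (this.mp ⟨hu', hna⟩).2 ha
  · have hu' : u ≠ w := fun e => hw (e ▸ hu)
    have hv' : v ≠ w := fun e => hw (e ▸ hv)
    simp only [SimpleGraph.compl_adj]
    constructor
    · rintro ⟨_, hna⟩; exact ⟨hv', fun ha => hna (this.mpr ha)⟩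
    · rintro ⟨_, hna⟩; exact ⟨hu', fun ha => hna (this.mp ha)⟩

lemma graphPrime_compl {V : Type*} (G : SimpleGraph V) :
    GraphPrime Gᶜ ↔ GraphPrime G := by
  unfold GraphPrime
  constructor <;> intro h ⟨S, h1, h2, h3⟩
  · exact h ⟨S, h1, h2, (sameNbhdOutside_compl G S).mpr h3⟩
  · exact h ⟨S, h1, h2, (sameNbhdOutside_compl G S).mp h3⟩

lemma degsum {W : Type*} [Fintype W] (G : SimpleGraph W) (v : W) :
    idegree G v + idegree Gᶜ v + 1 = Fintype.card W := by
  have hB : Gᶜ.neighborSet v = (G.neighborSet v ∪ {v})ᶜ := by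
    ext w
    simp only [SimpleGraph.mem_neighborSet, SimpleGraph.compl_adj, Set.mem_compl_iff,
      Set.mem_union, Set.mem_singleton_iff]
    constructor
    · rintro ⟨hne, hna⟩; push_neg; exact ⟨hna, fun h => hne h.symm⟩
    · intro h; push_neg at h; exact ⟨fun h' => h.2 h'.symm, h.1⟩
  have hv : v ∉ G.neighborSet v := by simp
  have h1 : (G.neighborSet v ∪ {v}).ncard = (G.neighborSet v).ncard + 1 := by
    rw [Set.ncard_union_eq (by simpa using hv) (Set.toFinite _) (Set.toFinite _),
      Set.ncard_singleton]
  have h2 : (G.neighborSet v ∪ {v}).ncard + ((G.neighborSet v ∪ {v})ᶜ).ncard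
      = Fintype.card W := by
    rw [Set.ncard_add_ncard_compl, Nat.card_eq_fintype_card]
  unfold idegree
  rw [Nat.card_coe_set_eq, Nat.card_coe_set_eq, hB]
  omega

lemma no_isolated {W : Type*} [Fintype W] (G : SimpleGraph W)
    (h3 : 3 ≤ Fintype.card W) (hp : GraphPrime G) (v : W) : idegree G v ≠ 0 := by
  intro h0
  have hempty : ∀ w, ¬ G.Adj v w := by
    intro w hw
    have : (G.neighborSet v).ncard = 0 := by
      rw [← Nat.card_coe_set_eq]; exact h0
    have hne : G.neighborSet v ≠ ∅ := by
      intro he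
      have : w ∈ G.neighborSet v := hw
      rw [he] at this
      exact this
    exact hne ((Set.ncard_eq_zero (Set.toFinite _)).mp this)
  apply hp
  refine ⟨{v}ᶜ, ?_, ?_, ?_⟩
  · have := Set.ncard_add_ncard_compl ({v} : Set W)
    rw [Set.ncard_singleton, Nat.card_eq_fintype_card] at this
    omega
  · intro he
    have : v ∈ ({v}ᶜ : Set W) := he ▸ Set.mem_univ v
    simp at this
  · intro u _ u' _ w hw
    have hwv : w = v := by simpa using hw
    subst hwv
    constructor
    · intro h; exact absurd h.symm (hempty u)
    · intro h; exact absurd h.symm (hempty u')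

lemma idegree_card3 {W : Type*} [Fintype W] (G : SimpleGraph W)
    (h3 : 3 ≤ Fintype.card W) (hp : GraphPrime G) (v : W)
    (h1 : idegree G v ≤ 1) : idegree G v = 1 :=
  by have := no_isolated G h3 hp v; omega

/-- `H ∈ 𝓗` if and only if `H ∈ 𝓙` and the complement of `H` is in `𝓙`. -/
theorem stmt_6 {V : Type*} [Fintype V] (H : SimpleGraph V) :
    InH H ↔ (InJ H ∧ InJ Hᶜ) := by
  classical
  have hcard : ∀ S : Set V, S.ncard = Fintype.card ↥S := by
    intro S
    rw [← Nat.card_coe_set_eq, Nat.card_eq_fintype_card]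
  constructor
  · intro hH
    constructor
    · intro S h3
      by_cases hp : GraphPrime (H.induce S)
      · left
        obtain ⟨⟨x, hx⟩, _⟩ := hH S h3 hp
        exact ⟨x, hx.le⟩
      · right; exact hp
    · intro S h3
      by_cases hp : GraphPrime (Hᶜ.induce S)
      · left
        rw [compl_induce] at hp
        have hp' : GraphPrime (H.induce S) := (graphPrime_compl _).mp hp
        obtain ⟨_, ⟨x, hx⟩⟩ := hH S h3 hp'
        refine ⟨x, ?_⟩
        have hs := degsum (H.induce S) x
        rw [← hcard S] at hs
        rw [compl_induce]
        omega
      · right; exact hp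
  · rintro ⟨hJ, hJc⟩ S h3 hp
    have h3' : 3 ≤ Fintype.card ↥S := by rw [← hcard S]; exact h3
    constructor
    · rcases hJ S h3 with ⟨x, hx⟩ | hnp
      · exact ⟨x, idegree_card3 _ h3' hp x hx⟩
      · exact absurd hp hnp
    · rcases hJc S h3 with ⟨x, hx⟩ | hnp
      · refine ⟨x, ?_⟩
        rw [compl_induce] at hx
        have hpc : GraphPrime (H.induce S)ᶜ := (graphPrime_compl _).mpr hp
        have hx1 : idegree (H.induce S)ᶜ x = 1 := idegree_card3 _ h3' hpc x hx
        have hs := degsum (H.induce S) x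
        rw [← hcard S] at hs
        omega
      · rw [compl_induce] at hnp
        exact absurd ((graphPrime_compl _).mpr hp) hnp
end
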